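/- Minkowski's question mark function q is strictly increasing on [0,1]. -/

import Mathlib

/-- The self-similarity operator for Minkowski's question mark function. -/
noncomputable def minkT (f : ℝ → ℝ) : ℝ → ℝ := fun x =>
  if x ≤ 1/2 then (1/2) * f (x / (1 - x)) else 1 - (1/2) * f ((1 - x) / x)

/-- Minkowski's question mark function, obtained as the (uniform) limit of the
iteration of `minkT` starting from the identity distribution function. -/
noncomputable def minkQ : ℝ → ℝ := fun x =>
  Filter.limUnder Filter.atTop (fun n => (minkT^[n] id) x)

/-!
The question mark function satisfies `q x = q (x / (1 - x)) / 2` on `[0, 1/2]` and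
`q x = 1 - q ((1 - x) / x) / 2` on `(1/2, 1]`. Both branch maps expand so strongly that, for
`x < y` in the same half, the reciprocal of the gap `y - x` drops by at least `1` (in the right
half the order is reversed). Hence after at most `⌈1 / (y - x)⌉` applications of the functional
equation the pair straddles `1/2`, where `q x ≤ 1/2 < q y`; the strict inequality comes from
`0 < q` on `(0, 1]`, proved by the same descent with `x = 0`.
-/

open Set Filter Topology

section

variable {x y : ℝ}

lemma div_one_sub_mem_Icc (hx : 0 ≤ x) (hx' : x ≤ 1/2) : x / (1 - x) ∈ Icc (0:ℝ) 1 :=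
  ⟨div_nonneg hx (by linarith), (div_le_one (by linarith)).2 (by linarith)⟩

lemma one_sub_div_mem_Icc (hx : 1/2 ≤ x) (hx' : x ≤ 1) : (1 - x) / x ∈ Icc (0:ℝ) 1 := by
  simpa only [sub_sub_cancel] using div_one_sub_mem_Icc (x := 1 - x) (by linarith) (by linarith)

lemma div_one_sub_lt_div_one_sub (hxy : x < y) (hy : y < 1) : x / (1 - x) < y / (1 - y) := by
  rw [div_lt_div_iff₀ (by linarith) (by linarith)]
  nlinarith

lemma inv_sub_div_one_sub_le (hx : 0 ≤ x) (hxy : x < y) (hy : y < 1) :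
    (y / (1 - y) - x / (1 - x))⁻¹ ≤ (y - x)⁻¹ - 1 := by
  have hd : y / (1 - y) - x / (1 - x) = (y - x) / ((1 - x) * (1 - y)) := by
    field_simp [(by linarith : 1 - x ≠ 0), (by linarith : 1 - y ≠ 0)]
    ring
  rw [hd, inv_div, le_sub_iff_add_le, div_add_one (by linarith), inv_eq_one_div,
    div_le_div_iff_of_pos_right (by linarith)]
  nlinarith

lemma one_sub_div_lt_one_sub_div (hx : 0 < x) (hxy : x < y) : (1 - y) / y < (1 - x) / x := by
  simpa only [sub_sub_cancel] using
    div_one_sub_lt_div_one_sub (x := 1 - y) (y := 1 - x) (by linarith) (by linarith)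

lemma inv_sub_one_sub_div_le (hx : 0 < x) (hxy : x < y) (hy : y ≤ 1) :
    ((1 - x) / x - (1 - y) / y)⁻¹ ≤ (y - x)⁻¹ - 1 := by
  simpa only [sub_sub_cancel, sub_sub_sub_cancel_left] using
    inv_sub_div_one_sub_le (x := 1 - y) (y := 1 - x) (by linarith) (by linarith) (by linarith)

end

lemma minkT_mapsTo {f : ℝ → ℝ} (hf : MapsTo f (Icc 0 1) (Icc 0 1)) :
    MapsTo (minkT f) (Icc 0 1) (Icc 0 1) := by
  intro x hx
  unfold minkT
  split_ifs with h
  · have := hf (div_one_sub_mem_Icc hx.1 h)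
    constructor <;> linarith [this.1, this.2]
  · have := hf (one_sub_div_mem_Icc (by linarith) hx.2)
    constructor <;> linarith [this.1, this.2]

lemma minkT_iterate_mapsTo (n : ℕ) : MapsTo (minkT^[n] id) (Icc 0 1) (Icc 0 1) := by
  induction n with
  | zero => exact mapsTo_id _
  | succ n ih => rw [Function.iterate_succ']; exact minkT_mapsTo ih

lemma dist_minkT_le {f g : ℝ → ℝ} {c : ℝ} (h : ∀ t ∈ Icc (0:ℝ) 1, dist (f t) (g t) ≤ c)
    {x : ℝ} (hx : x ∈ Icc (0:ℝ) 1) : dist (minkT f x) (minkT g x) ≤ c / 2 := by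
  unfold minkT
  split_ifs with hx'
  · have := h _ (div_one_sub_mem_Icc hx.1 hx')
    rw [Real.dist_eq] at this ⊢
    rw [← mul_sub, abs_mul, abs_of_pos one_half_pos]
    linarith
  · have := h _ (one_sub_div_mem_Icc (by linarith) hx.2)
    rw [Real.dist_eq] at this
    rw [Real.dist_eq, sub_sub_sub_cancel_left, ← mul_sub, abs_mul, abs_sub_comm,
      abs_of_pos one_half_pos]
    linarith

lemma dist_minkT_iterate_succ_le (n : ℕ) {x : ℝ} (hx : x ∈ Icc (0:ℝ) 1) :
    dist ((minkT^[n] id) x) ((minkT^[n + 1] id) x) ≤ (1/2) ^ n := by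
  induction n generalizing x with
  | zero => exact Real.dist_le_of_mem_Icc_01 hx (minkT_iterate_mapsTo 1 hx)
  | succ n ih =>
    simp only [Function.iterate_succ', Function.comp_apply] at ih ⊢
    rw [pow_succ, ← div_eq_mul_one_div]
    exact dist_minkT_le (fun t ht => ih ht) hx

lemma tendsto_minkT_iterate_minkQ {x : ℝ} (hx : x ∈ Icc (0:ℝ) 1) :
    Tendsto (fun n => (minkT^[n] id) x) atTop (𝓝 (minkQ x)) :=
  (cauchySeq_of_le_geometric (1/2) 1 (by norm_num)
    fun n => by simpa only [one_mul] using dist_minkT_iterate_succ_le n hx).tendsto_limUnder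

lemma minkQ_mapsTo : MapsTo minkQ (Icc 0 1) (Icc 0 1) := fun _ hx =>
  isClosed_Icc.mem_of_tendsto (tendsto_minkT_iterate_minkQ hx)
    (Eventually.of_forall fun n => minkT_iterate_mapsTo n hx)

lemma minkQ_eq_minkT {x : ℝ} (hx : x ∈ Icc (0:ℝ) 1) : minkQ x = minkT minkQ x := by
  have hsucc : Tendsto (fun n => minkT (minkT^[n] id) x) atTop (𝓝 (minkQ x)) := by
    simpa only [Function.iterate_succ', Function.comp_def] using
      (tendsto_minkT_iterate_minkQ hx).comp (tendsto_add_atTop_nat 1)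
  refine tendsto_nhds_unique hsucc ?_
  unfold minkT
  split_ifs with h
  · exact (tendsto_minkT_iterate_minkQ (div_one_sub_mem_Icc hx.1 h)).const_mul _
  · exact ((tendsto_minkT_iterate_minkQ (one_sub_div_mem_Icc (by linarith) hx.2)).const_mul
      _).const_sub _

section

variable {x : ℝ}

lemma minkQ_of_le_half (hx : 0 ≤ x) (hx' : x ≤ 1/2) : minkQ x = 1/2 * minkQ (x / (1 - x)) := by
  rw [minkQ_eq_minkT ⟨hx, by linarith⟩, minkT, if_pos hx']

lemma minkQ_of_half_lt (hx : 1/2 < x) (hx' : x ≤ 1) :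
    minkQ x = 1 - 1/2 * minkQ ((1 - x) / x) := by
  rw [minkQ_eq_minkT ⟨by linarith, hx'⟩, minkT, if_neg (not_le.2 hx)]

lemma minkQ_le_half (hx : 0 ≤ x) (hx' : x ≤ 1/2) : minkQ x ≤ 1/2 := by
  rw [minkQ_of_le_half hx hx']
  linarith [(minkQ_mapsTo (div_one_sub_mem_Icc hx hx')).2]

lemma minkQ_pos (hx : 0 < x) (hx' : x ≤ 1) : 0 < minkQ x := by
  obtain ⟨n, hn⟩ := exists_nat_ge x⁻¹
  induction n generalizing x with
  | zero => exact absurd hn (by simpa using hx)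
  | succ n ih =>
    rcases le_or_gt x (1/2) with hx2 | hx2
    · have hinv : (x / (1 - x))⁻¹ = x⁻¹ - 1 := by
        rw [inv_div, sub_div, div_self (by linarith), one_div]
      rw [minkQ_of_le_half hx.le hx2]
      have := ih (div_pos hx (by linarith)) (div_one_sub_mem_Icc hx.le hx2).2
        (by push_cast at hn; linarith)
      linarith
    · rw [minkQ_of_half_lt hx2 hx']
      linarith [(minkQ_mapsTo (one_sub_div_mem_Icc hx2.le hx')).2]

lemma minkQ_lt_one (hx : 0 ≤ x) (hx' : x < 1) : minkQ x < 1 := by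
  rcases le_or_gt x (1/2) with hx2 | hx2
  · linarith [minkQ_le_half hx hx2]
  · rw [minkQ_of_half_lt hx2 hx'.le]
    have := minkQ_pos (div_pos (by linarith) (by linarith)) (one_sub_div_mem_Icc hx2.le hx'.le).2
    linarith

lemma half_lt_minkQ (hx : 1/2 < x) (hx' : x ≤ 1) : 1/2 < minkQ x := by
  rw [minkQ_of_half_lt hx hx']
  have := minkQ_lt_one (one_sub_div_mem_Icc hx.le hx').1
    ((div_lt_one (by linarith)).2 (by linarith))
  linarith

end

theorem minkQ_strictMonoOn : StrictMonoOn minkQ (Set.Icc (0:ℝ) 1) := by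
  intro x hx y hy hxy
  obtain ⟨n, hn⟩ := exists_nat_ge (y - x)⁻¹
  induction n generalizing x y with
  | zero => exact absurd hn (by simpa using hxy)
  | succ n ih =>
    push_cast at hn
    rcases le_or_gt y (1/2) with hy2 | hy2
    · have hx2 : x ≤ 1/2 := by linarith
      have := ih (div_one_sub_mem_Icc hx.1 hx2) (div_one_sub_mem_Icc hy.1 hy2)
        (div_one_sub_lt_div_one_sub hxy (by linarith))
        (by linarith [inv_sub_div_one_sub_le hx.1 hxy (by linarith)])
      rw [minkQ_of_le_half hx.1 hx2, minkQ_of_le_half hy.1 hy2]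
      linarith
    rcases le_or_gt x (1/2) with hx2 | hx2
    · exact (minkQ_le_half hx.1 hx2).trans_lt (half_lt_minkQ hy2 hy.2)
    · have := ih (one_sub_div_mem_Icc (by linarith) hy.2) (one_sub_div_mem_Icc hx2.le hx.2)
        (one_sub_div_lt_one_sub_div (by linarith) hxy)
        (by linarith [inv_sub_one_sub_div_le (by linarith) hxy hy.2])
      rw [minkQ_of_half_lt hx2 hx.2, minkQ_of_half_lt (by linarith) hy.2]
      linarith
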